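/- If Φ is an admissible subset of ℤ, then Φ^{≥0} = {i ∈ Φ | i ≥ 0} is admissible. -/
import Mathlib

def AdmissibleSubset (Φ : Set ℤ) : Prop :=
  0 ∈ Φ ∧ ∀ i ∈ Φ, ∀ j ∈ Φ, ∀ k ∈ Φ, i + j + k ∈ Φ → (i + j ∈ Φ ↔ j + k ∈ Φ)

/-- If `Φ` is admissible, then `Φ^{≥0} = {i ∈ Φ | i ≥ 0}` is admissible. -/
theorem admissible_nonneg (Φ : Set ℤ) (hΦ : AdmissibleSubset Φ) :
    AdmissibleSubset {i | i ∈ Φ ∧ 0 ≤ i} := by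
  refine ⟨⟨hΦ.1, le_refl 0⟩, ?_⟩
  rintro i ⟨hi, hi0⟩ j ⟨hj, hj0⟩ k ⟨hk, hk0⟩ ⟨hs, _⟩
  have h := hΦ.2 i hi j hj k hk hs
  exact ⟨fun ⟨h1, _⟩ => ⟨h.mp h1, by omega⟩, fun ⟨h1, _⟩ => ⟨h.mpr h1, by omega⟩⟩
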